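/- Consider the n-player normalised total effort game (n ≥ 3) with β_1 < … < β_n in a 1-value equilibrium where all n players contribute x_eq > 0 with n·x_eq ≤ β_1, and suppose player k unilaterally changes their contribution to x_{k0} ≥ 0. Then: (i) if x_{k0} ≤ x_eq, every other player j ≠ k's best-response value to the deviated profile still equals x_eq; (ii) if x_{k0} > x_eq, there exists a player j ≠ k whose best-response value to the deviated profile differs from x_eq. -/

import Mathlib

/-- Maximum of the contributions of the players other than `j`. -/
noncomputable def othersMax {m : ℕ} (y : Fin m → ℝ) (j : Fin m) : ℝ :=
  ⨆ i : {i : Fin m // i ≠ j}, y i.val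

/-- Sum of the contributions of the players other than `j`. -/
noncomputable def othersSum {m : ℕ} (y : Fin m → ℝ) (j : Fin m) : ℝ :=
  ∑ i ∈ Finset.univ.erase j, y i

/-- Best-response value of a player with benefit-cost ratio `β` against the profile `y`:
`max(0, min(M, β − S))` where `M` and `S` are the maximum and the sum of the other
players' contributions. -/
noncomputable def bestResp {m : ℕ} (β : ℝ) (y : Fin m → ℝ) (j : Fin m) : ℝ :=
  max 0 (min (othersMax y j) (β - othersSum y j))

lemma othersSum_dev (n : ℕ) (hn : 3 ≤ n) (xeq xk0 : ℝ) (k j : Fin n) (hjk : j ≠ k) :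
    othersSum (Function.update (fun _ => xeq) k xk0) j = xk0 + ((n : ℝ) - 2) * xeq := by
  set y := Function.update (fun _ : Fin n => xeq) k xk0 with hy
  have hk : k ∈ Finset.univ.erase j := by simp [Ne.symm hjk]
  rw [othersSum, ← Finset.add_sum_erase _ _ hk]
  have h1 : y k = xk0 := by simp [hy]
  have h2 : ∀ i ∈ (Finset.univ.erase j).erase k, y i = xeq := by
    intro i hi
    have : i ≠ k := (Finset.mem_erase.mp hi).1
    simp [hy, Function.update_of_ne this]
  rw [h1, Finset.sum_congr rfl h2, Finset.sum_const]
  have hcard : ((Finset.univ.erase j).erase k).card = n - 2 := by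
    rw [Finset.card_erase_of_mem hk, Finset.card_erase_of_mem (Finset.mem_univ j)]
    simp only [Finset.card_univ, Fintype.card_fin]
    omega
  rw [hcard, nsmul_eq_mul]
  have : ((n - 2 : ℕ) : ℝ) = (n : ℝ) - 2 := by
    have : (2:ℕ) ≤ n := by omega
    push_cast [Nat.cast_sub this]
    ring
  rw [this]

lemma othersMax_dev (n : ℕ) (hn : 3 ≤ n) (xeq xk0 : ℝ) (k j : Fin n) (hjk : j ≠ k) :
    othersMax (Function.update (fun _ => xeq) k xk0) j = max xk0 xeq := by
  set y := Function.update (fun _ : Fin n => xeq) k xk0 with hy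
  have hne : Nonempty {i : Fin n // i ≠ j} := ⟨⟨k, Ne.symm hjk⟩⟩
  have hbdd : BddAbove (Set.range fun i : {i : Fin n // i ≠ j} => y i.val) :=
    Set.Finite.bddAbove (Set.finite_range _)
  -- find i ≠ j, i ≠ k
  have hex : ∃ i : Fin n, i ≠ j ∧ i ≠ k := by
    have hsub : ¬ (Finset.univ : Finset (Fin n)) ⊆ {j, k} := by
      intro h
      have := Finset.card_le_card h
      have h2 : ({j, k} : Finset (Fin n)).card ≤ 2 :=
        (Finset.card_insert_le _ _).trans (by simp)
      simp [Finset.card_univ] at this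
      omega
    obtain ⟨i, -, hi⟩ := Finset.not_subset.mp hsub
    simp at hi
    exact ⟨i, hi.1, hi.2⟩
  obtain ⟨i0, hi0j, hi0k⟩ := hex
  apply le_antisymm
  · apply ciSup_le
    intro i
    by_cases h : i.val = k
    · simp [hy, h, le_max_left]
    · simp [hy, Function.update_of_ne h, le_max_right]
  · apply max_le
    · have := le_ciSup hbdd ⟨k, Ne.symm hjk⟩
      simpa [hy, othersMax] using this
    · have := le_ciSup hbdd ⟨i0, hi0j⟩
      simpa [hy, othersMax, Function.update_of_ne hi0k] using this

/-- Deviation from a 1-value equilibrium: in the `n`-player NTEG (`n ≥ 3`) with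
`β₁ < … < β_n` where all `n` players contribute `x_eq > 0` with `n·x_eq ≤ β₁`, suppose
player `k` unilaterally deviates to `x_{k0} ≥ 0`. Then (i) if `x_{k0} ≤ x_eq`, every
other player's best-response value to the deviated profile still equals `x_eq`;
(ii) if `x_{k0} > x_eq`, some other player's best-response value differs from `x_eq`. -/
theorem deviation_one_value (n : ℕ) (hn : 3 ≤ n) (v c : Fin n → ℝ)
    (hv : ∀ i, 0 < v i) (hc : ∀ i, 0 < c i)
    (hβ : StrictMono (fun i : Fin n => v i / c i))
    (xeq : ℝ) (hxeq : 0 < xeq)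
    (heq : (n : ℝ) * xeq ≤ v ⟨0, by omega⟩ / c ⟨0, by omega⟩)
    (k : Fin n) (xk0 : ℝ) (hxk0 : 0 ≤ xk0) :
    (xk0 ≤ xeq → ∀ j : Fin n, j ≠ k →
        bestResp (v j / c j) (Function.update (fun _ => xeq) k xk0) j = xeq) ∧
    (xeq < xk0 → ∃ j : Fin n, j ≠ k ∧
        bestResp (v j / c j) (Function.update (fun _ => xeq) k xk0) j ≠ xeq) := by
  set y := Function.update (fun _ : Fin n => xeq) k xk0 with hy
  have hβ0 : ∀ j : Fin n, v ⟨0, by omega⟩ / c ⟨0, by omega⟩ ≤ v j / c j := by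
    intro j
    exact hβ.monotone (by exact Fin.mk_le_of_le_val (Nat.zero_le _))
  constructor
  · intro hle j hjk
    rw [bestResp, othersSum_dev n hn xeq xk0 k j hjk, othersMax_dev n hn xeq xk0 k j hjk]
    have hM : max xk0 xeq = xeq := max_eq_right hle
    have hS : xeq ≤ v j / c j - (xk0 + ((n:ℝ) - 2) * xeq) := by
      have h1 : (n:ℝ) * xeq ≤ v j / c j := le_trans heq (hβ0 j)
      nlinarith
    rw [hM, min_eq_left hS, max_eq_right hxeq.le]
  · intro hlt
    -- key: if bestResp = xeq then β_j determined
    have key : ∀ j : Fin n, j ≠ k → bestResp (v j / c j) y j = xeq →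
        v j / c j = xk0 + ((n:ℝ) - 1) * xeq := by
      intro j hjk hbr
      rw [bestResp, othersSum_dev n hn xeq xk0 k j hjk, othersMax_dev n hn xeq xk0 k j hjk,
        max_eq_left hlt.le] at hbr
      have hmin : min xk0 (v j / c j - (xk0 + ((n:ℝ) - 2) * xeq)) = xeq := by
        rcases le_or_gt (min xk0 (v j / c j - (xk0 + ((n:ℝ) - 2) * xeq))) 0 with h | h
        · rw [max_eq_left h] at hbr; linarith
        · rw [max_eq_right h.le] at hbr; exact hbr
      rcases min_cases xk0 (v j / c j - (xk0 + ((n:ℝ) - 2) * xeq)) with ⟨h1, -⟩ | ⟨h1, -⟩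
      · rw [h1] at hmin; linarith
      · rw [h1] at hmin; linarith
    -- two distinct players ≠ k
    have h2 : 1 < (Finset.univ.erase k).card := by
      rw [Finset.card_erase_of_mem (Finset.mem_univ k), Finset.card_univ]
      simp; omega
    obtain ⟨a, ha, b, hb, hab⟩ := Finset.one_lt_card.mp h2
    have hak : a ≠ k := Finset.ne_of_mem_erase ha
    have hbk : b ≠ k := Finset.ne_of_mem_erase hb
    by_cases hA : bestResp (v a / c a) y a = xeq
    · refine ⟨b, hbk, fun hB => ?_⟩
      have := (key a hak hA).trans (key b hbk hB).symm
      exact hab (hβ.injective this)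
    · exact ⟨a, hak, hA⟩
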